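/- arXiv:math/0608568 — 2 statements merged into one kernel-verified Lean document; each statement's English description precedes it below -/
import Mathlib

section
/- If a + b > 0, ab(c−a) > 0 and b(2a² + bc − ac) > 0, then every root of λ³ + (a+b)λ² + bcλ + 2ab(c−a) has negative real part. -/
/-- Routh–Hurwitz for the T system at `E₁,₂`: if `a + b > 0`, `ab(c-a) > 0`
and `b(2a² + bc - ac) > 0`, every root of
`λ³ + (a+b)λ² + bcλ + 2ab(c-a)` has negative real part. -/
theorem stmt_5 (a b c : ℝ) (h1 : 0 < a + b) (h2 : 0 < a * b * (c - a))
    (h3 : 0 < b * (2 * a ^ 2 + b * c - a * c)) :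
    ∀ z : ℂ, z ^ 3 + (a + b) * z ^ 2 + (b * c) * z + (2 * a * b * (c - a)) = 0 →
      z.re < 0 := by
  intro z hz
  by_contra hx'
  push_neg at hx'
  set x := z.re with hxdef
  set y := z.im with hydef
  have h0 := hz
  rw [Complex.ext_iff] at h0
  obtain ⟨hre0, him0⟩ := h0
  simp only [Complex.add_re, Complex.add_im, Complex.mul_re, Complex.mul_im,
    Complex.ofReal_re, Complex.ofReal_im, Complex.zero_re, Complex.zero_im, Complex.sub_re, Complex.sub_im, Complex.re_ofNat, Complex.im_ofNat,
    pow_succ, pow_zero, one_mul] at hre0 him0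
  have hre : x^3 - 3*x*y^2 + (a+b)*(x^2 - y^2) + b*c*x + 2*a*b*(c-a) = 0 := by
    linear_combination hre0
  have him : y * (3*x^2 - y^2 + 2*(a+b)*x + b*c) = 0 := by
    linear_combination him0
  -- pq - r > 0
  have hpq : 0 < (a+b)*(b*c) - 2*a*b*(c-a) := by nlinarith
  have hq : 0 < b*c := by nlinarith
  rcases mul_eq_zero.mp him with h | h
  · rw [h] at hre
    nlinarith [mul_nonneg (mul_nonneg hx' hx') hx', mul_nonneg hx' hx',
      mul_pos hq (lt_of_lt_of_le (by linarith : (0:ℝ) < 1) (le_refl 1))]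
  · have hy2 : y^2 = 3*x^2 + 2*(a+b)*x + b*c := by linarith
    nlinarith [mul_nonneg (mul_nonneg hx' hx') hx', mul_nonneg hx' hx',
      mul_pos h1 hq, mul_nonneg (mul_nonneg hx' hx') h1.le, mul_nonneg hx' hq.le,
      mul_nonneg hx' (mul_pos h1 h1).le]
end

section
/- Let a, b, c be real with a ≠ 0, and suppose (x(t), y(t), z(t)) solves the T system with x(t) ≠ 0 for all t. Then y = x + ẋ/a and z = −(ẍ + aẋ)/(a²x) + (c−a)/a, and x satisfies the third-order scalar ODE x·x⁗⁽³⁾ + (a+b)x·ẍ − ẋ·ẍ − a·ẋ² + ab·x·ẋ + a²x⁴ + a·x³·ẋ − ab(c−a)x² = 0. -/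
/-- Scalar reduction of the T system: if `(x, y, z)` solves the T system with
`x` never vanishing, then `y = x + ẋ/a`, `z = -(ẍ + aẋ)/(a²x) + (c-a)/a`, and
`x` satisfies the third-order ODE
`x·x''' + (a+b)x·ẍ - ẋ·ẍ - aẋ² + abxẋ + a²x⁴ + ax³ẋ - ab(c-a)x² = 0`. -/
theorem stmt_10 (a b c : ℝ) (ha : a ≠ 0) (x y z : ℝ → ℝ)
    (hx : Differentiable ℝ x) (hy : Differentiable ℝ y) (hz : Differentiable ℝ z)
    (hx' : ∀ t, deriv x t = a * (y t - x t))
    (hy' : ∀ t, deriv y t = (c - a) * x t - a * x t * z t)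
    (hz' : ∀ t, deriv z t = -b * z t + x t * y t)
    (hxne : ∀ t, x t ≠ 0) :
    ∀ t : ℝ,
      y t = x t + deriv x t / a ∧
      z t = -((deriv (deriv x) t + a * deriv x t) / (a ^ 2 * x t)) + (c - a) / a ∧
      x t * deriv (deriv (deriv x)) t + (a + b) * x t * deriv (deriv x) t -
          deriv x t * deriv (deriv x) t - a * (deriv x t) ^ 2 +
          a * b * x t * deriv x t + a ^ 2 * (x t) ^ 4 +
          a * (x t) ^ 3 * deriv x t - a * b * (c - a) * (x t) ^ 2 = 0 := by
  have Hx : ∀ t, HasDerivAt x (a * (y t - x t)) t := fun t =>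
    (hx' t) ▸ (hx t).hasDerivAt
  have Hy : ∀ t, HasDerivAt y ((c - a) * x t - a * x t * z t) t := fun t =>
    (hy' t) ▸ (hy t).hasDerivAt
  have Hz : ∀ t, HasDerivAt z (-b * z t + x t * y t) t := fun t =>
    (hz' t) ▸ (hz t).hasDerivAt
  -- second derivative
  have hdx : deriv x = fun t => a * (y t - x t) := funext hx'
  have H2 : ∀ t, HasDerivAt (deriv x)
      (a * (((c - a) * x t - a * x t * z t) - a * (y t - x t))) t := by
    intro t
    rw [hdx]
    exact (((Hy t).sub (Hx t)).const_mul a)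
  have hd2 : ∀ t, deriv (deriv x) t
      = a * (((c - a) * x t - a * x t * z t) - a * (y t - x t)) :=
    fun t => (H2 t).deriv
  -- third derivative
  have hd2f : deriv (deriv x)
      = fun t => a * (((c - a) * x t - a * x t * z t) - a * (y t - x t)) :=
    funext hd2
  have H3 : ∀ t, HasDerivAt (deriv (deriv x))
      (a * (((c - a) * (a * (y t - x t))
          - a * ((a * (y t - x t)) * z t + x t * (-b * z t + x t * y t)))
        - a * (((c - a) * x t - a * x t * z t) - a * (y t - x t)))) t := by
    intro t
    rw [hd2f]
    have h := ((((Hx t).const_mul (c - a)).sub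
        ((((Hx t).mul (Hz t)).const_mul a))).sub
        (((Hy t).sub (Hx t)).const_mul a)).const_mul a
    exact h.congr_of_eventuallyEq (Filter.Eventually.of_forall fun s => by simp only [Pi.sub_apply, Pi.mul_apply]; ring)
  have hd3 : ∀ t, deriv (deriv (deriv x)) t
      = a * (((c - a) * (a * (y t - x t))
          - a * ((a * (y t - x t)) * z t + x t * (-b * z t + x t * y t)))
        - a * (((c - a) * x t - a * x t * z t) - a * (y t - x t))) :=
    fun t => (H3 t).deriv
  intro t
  refine ⟨?_, ?_, ?_⟩
  · rw [hx' t]; field_simp; ring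
  · rw [hd2 t, hx' t]
    field_simp [hxne t]
    ring
  · rw [hd3 t, hd2 t, hx' t]
    ring
end
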